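/- Let G be a finite directed weighted graph (weights in ℕ) with initial node g₀, and suppose every sufficiently long path from g₀ (of total weight ≥ t₀) passes through a node of a cycle of positive total weight d, where d divides L. Then for every path γ from g₀ of total weight w ≥ t₀ and every k ∈ ℕ, there exists a path γ' from g₀ with the same final node as γ and total weight w + k·L. -/

import Mathlib

/-!
Write the path as `γ = a ++ v :: b`, where `v` lies on a designated cycle `v :: ds ++ [v]` of
weight `d ∣ L`. Splicing the cycle in at `v` gives `a ++ v :: ds ++ v :: b`, a path with the
same endpoints whose weight is larger by exactly `d`, and which still passes through `v`.
Doing this `k · (L / d)` times adds `k · L`.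
-/

/-- Total weight of a path given as a list of visited nodes. -/
def pathWeight {V : Type*} (w : V → V → ℕ) : List V → ℕ
  | [] => 0
  | [_] => 0
  | a :: b :: rest => w a b + pathWeight w (b :: rest)

section

variable {V : Type*} {E : V → V → Prop}

theorem pathWeight_append_cons (w : V → V → ℕ) (a : List V) (v : V) (b : List V) :
    pathWeight w (a ++ v :: b) = pathWeight w (a ++ [v]) + pathWeight w (v :: b) := by
  induction a with
  | nil => simp [pathWeight]
  | cons x l ih =>
    cases l with
    | nil => simp [pathWeight]
    | cons y t =>
      simp only [List.cons_append, pathWeight] at ih ⊢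
      rw [ih, Nat.add_assoc]

theorem List.exists_eq_cons_append_singleton_of_two_le_length {c : List V} {v : V}
    (hlen : 2 ≤ c.length) (hhead : c.head? = some v) (hlast : c.getLast? = some v) :
    ∃ ds, c = v :: (ds ++ [v]) := by
  obtain ⟨ys, rfl⟩ := List.getLast?_eq_some_iff.mp hlast
  obtain _ | ⟨y, ds⟩ := ys
  · simp at hlen
  · obtain rfl : y = v := by simpa using hhead
    exact ⟨ds, rfl⟩

theorem exists_isChain_splice_cycle (w : V → V → ℕ) {γ c : List V} {v : V}
    (hγ : γ.IsChain E) (hv : v ∈ γ) (hlen : 2 ≤ c.length) (hhead : c.head? = some v)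
    (hlast : c.getLast? = some v) (hc : c.IsChain E) :
    ∃ γ' : List V, γ'.head? = γ.head? ∧ γ'.IsChain E ∧ γ'.getLast? = γ.getLast? ∧
      v ∈ γ' ∧ pathWeight w γ' = pathWeight w γ + pathWeight w c := by
  obtain ⟨a, b, rfl⟩ := List.append_of_mem hv
  obtain ⟨ds, rfl⟩ := List.exists_eq_cons_append_singleton_of_two_le_length hlen hhead hlast
  refine ⟨a ++ v :: (ds ++ v :: b), ?_, ?_, ?_, by simp, ?_⟩
  · cases a <;> simp
  · have hγ' : (a ++ [v] ++ b).IsChain E := by simpa using hγ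
    have hloop : (v :: ds ++ [v] ++ b).IsChain E :=
      List.IsChain.append_overlap (by simpa using hc) hγ.right_of_append (List.cons_ne_nil v [])
    simpa using hγ'.left_of_append.append_overlap (l₃ := ds ++ [v] ++ b) (by simpa using hloop)
      (List.cons_ne_nil v [])
  · simp [List.getLast?_append, List.getLast?_cons]
  · have hcycle : pathWeight w (v :: (ds ++ v :: b)) =
        pathWeight w (v :: (ds ++ [v])) + pathWeight w (v :: b) :=
      pathWeight_append_cons w (v :: ds) v b
    rw [pathWeight_append_cons w a v, pathWeight_append_cons w a v b, hcycle]
    ring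

theorem exists_isChain_splice_cycle_iterate (w : V → V → ℕ) {γ c : List V} {v : V}
    (hγ : γ.IsChain E) (hv : v ∈ γ) (hlen : 2 ≤ c.length) (hhead : c.head? = some v)
    (hlast : c.getLast? = some v) (hc : c.IsChain E) (n : ℕ) :
    ∃ γ' : List V, γ'.head? = γ.head? ∧ γ'.IsChain E ∧ γ'.getLast? = γ.getLast? ∧
      v ∈ γ' ∧ pathWeight w γ' = pathWeight w γ + n * pathWeight w c := by
  induction n with
  | zero => exact ⟨γ, rfl, hγ, rfl, hv, by simp⟩
  | succ n ih =>
    obtain ⟨γ₁, hhead₁, hγ₁, hlast₁, hv₁, hw₁⟩ := ih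
    obtain ⟨γ₂, hhead₂, hγ₂, hlast₂, hv₂, hw₂⟩ :=
      exists_isChain_splice_cycle w hγ₁ hv₁ hlen hhead hlast hc
    exact ⟨γ₂, hhead₂.trans hhead₁, hγ₂, hlast₂.trans hlast₁, hv₂, by rw [hw₂, hw₁]; ring⟩

end

theorem stmt10_general {V : Type*} (E : V → V → Prop) (w : V → V → ℕ)
    (g0 : V) (t₀ L : ℕ)
    (hcyc : ∀ γ : List V, γ.head? = some g0 → List.Chain' E γ →
      t₀ ≤ pathWeight w γ →
      ∃ v ∈ γ, ∃ c : List V, 2 ≤ c.length ∧ c.head? = some v ∧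
        c.getLast? = some v ∧ List.Chain' E c ∧ 0 < pathWeight w c ∧
        pathWeight w c ∣ L) :
    ∀ γ : List V, γ.head? = some g0 → List.Chain' E γ →
      t₀ ≤ pathWeight w γ → ∀ k : ℕ,
      ∃ γ' : List V, γ'.head? = some g0 ∧ List.Chain' E γ' ∧
        γ'.getLast? = γ.getLast? ∧
        pathWeight w γ' = pathWeight w γ + k * L := by
  intro γ hhead hγ ht k
  obtain ⟨v, hv, c, hlen, hchead, hclast, hc, -, m, hm⟩ := hcyc γ hhead hγ ht
  obtain ⟨γ', hhead', hγ', hlast', -, hw'⟩ :=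
    exists_isChain_splice_cycle_iterate w hγ hv hlen hchead hclast hc (k * m)
  exact ⟨γ', hhead'.trans hhead, hγ', hlast', by rw [hw', hm]; ring⟩

/-- If every path from `g0` of total weight ≥ `t₀` passes through a node lying
on a cycle of positive total weight dividing `L`, then reachability weights can
be shifted by any multiple of `L`: for every path `γ` of total weight `≥ t₀`
and every `k` there is a path with the same final node and total weight
`pathWeight γ + k·L`. -/
theorem stmt10 {V : Type*} [Fintype V] (E : V → V → Prop) (w : V → V → ℕ)
    (g0 : V) (t₀ L : ℕ) (hL : 0 < L)
    (hcyc : ∀ γ : List V, γ.head? = some g0 → List.Chain' E γ →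
      t₀ ≤ pathWeight w γ →
      ∃ v ∈ γ, ∃ c : List V, 2 ≤ c.length ∧ c.head? = some v ∧
        c.getLast? = some v ∧ List.Chain' E c ∧ 0 < pathWeight w c ∧
        pathWeight w c ∣ L) :
    ∀ γ : List V, γ.head? = some g0 → List.Chain' E γ →
      t₀ ≤ pathWeight w γ → ∀ k : ℕ,
      ∃ γ' : List V, γ'.head? = some g0 ∧ List.Chain' E γ' ∧
        γ'.getLast? = γ.getLast? ∧
        pathWeight w γ' = pathWeight w γ + k * L :=
  stmt10_general E w g0 t₀ L hcyc
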